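/- arXiv:2004.00722 — 3 statements merged into one kernel-verified Lean document; each statement's English description precedes it below -/
import Mathlib

section
/- Let P be a finite subset of a metric space, c_P an optimal (1,C)-median of P with C ⊆ X, and q' ∈ C with d(q', c_P) > 4ε₁·r̄ where r̄ = (1/|P|)Σ_{p∈P} d(p, c_P) and 0 < ε₁ < 1/9. Let B₂ = B(q', ε₁ r̄). If |P ∩ B₂| ≥ (1 − ε₁² − 2ε₁(1 − ε₁²))|P|, then Σ_{p∈P} d(p, q') < Σ_{p∈P} d(p, c_P), contradicting optimality of c_P; hence no such configuration exists. -/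
/-!
Switching the center from `c` to `q` changes the cost of a point `p` by `dist p q - dist p c`,
which is at most `dist q c` for every point and at most `2 r - dist q c` for a point within `r`
of `q`. If at least two thirds of the points lie within `r` of `q` and `dist q c > 4 r`, these
savings outweigh the losses, so `q` is strictly cheaper than `c`; for `0 < ε₁ < 1/9` the
fraction `1 - ε₁² - 2ε₁(1 - ε₁²)` exceeds two thirds.
-/

open Finset

section Cost

variable {X : Type*} [PseudoMetricSpace X]

theorem sum_dist_sub_sum_dist_le (P : Finset X) (q c : X) (r : ℝ) :
    ∑ p ∈ P, dist p q - ∑ p ∈ P, dist p c ≤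
      #{p ∈ P | dist p q ≤ r} * (2 * r - dist q c) + #{p ∈ P | ¬dist p q ≤ r} * dist q c := by
  rw [← sum_sub_distrib]
  calc ∑ p ∈ P, (dist p q - dist p c)
      ≤ ∑ p ∈ P, if dist p q ≤ r then 2 * r - dist q c else dist q c := by
        refine sum_le_sum fun p _ => ?_
        split_ifs with hp
        · linarith [dist_triangle_left q c p]
        · linarith [dist_triangle p c q, dist_comm c q]
    _ = _ := by rw [sum_ite, sum_const, sum_const, nsmul_eq_mul, nsmul_eq_mul]

theorem sum_dist_lt_of_two_thirds_le_card_filter {P : Finset X} (hP : P.Nonempty) {q c : X}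
    {r : ℝ} (hfar : 4 * r < dist q c)
    (hheavy : 2 / 3 * (#P : ℝ) ≤ #{p ∈ P | dist p q ≤ r}) :
    ∑ p ∈ P, dist p q < ∑ p ∈ P, dist p c := by
  have hcost := sum_dist_sub_sum_dist_le P q c r
  have hcard : (#{p ∈ P | dist p q ≤ r} : ℝ) + #{p ∈ P | ¬dist p q ≤ r} = #P := by
    exact_mod_cast card_filter_add_card_filter_not _
  have hn : (0 : ℝ) < #P := by exact_mod_cast hP.card_pos
  have hr : 0 ≤ dist q c - r := by linarith [dist_nonneg (x := q) (y := c)]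
  nlinarith [mul_le_mul_of_nonneg_right hheavy hr, mul_pos hn (sub_pos.mpr hfar)]

end Cost

theorem two_div_three_le_one_sub_sq_sub_two_mul {ε : ℝ} (hε0 : 0 ≤ ε) (hε : ε < 1 / 9) :
    2 / 3 ≤ 1 - ε ^ 2 - 2 * ε * (1 - ε ^ 2) := by
  nlinarith [mul_nonneg hε0 (sq_nonneg ε)]

theorem no_far_heavy_center_general {X : Type*} [MetricSpace X] (C : Set X) (P : Finset X)
    (hP : P.Nonempty) (cP q' : X) (hq' : q' ∈ C)
    (hopt : ∀ c ∈ C, ∑ p ∈ P, dist p cP ≤ ∑ p ∈ P, dist p c)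
    (ε₁ rbar : ℝ) (hε0 : 0 < ε₁) (hε9 : ε₁ < 1 / 9)
    (hfar : 4 * ε₁ * rbar < dist q' cP)
    (hheavy : (1 - ε₁ ^ 2 - 2 * ε₁ * (1 - ε₁ ^ 2)) * (P.card : ℝ) ≤
      ((P.filter fun p => dist p q' ≤ ε₁ * rbar).card : ℝ)) :
    False := by
  have hfraction := two_div_three_le_one_sub_sq_sub_two_mul hε0.le hε9
  have hheavy' : 2 / 3 * (#P : ℝ) ≤ #{p ∈ P | dist p q' ≤ ε₁ * rbar} :=
    (mul_le_mul_of_nonneg_right hfraction (Nat.cast_nonneg _)).trans hheavy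
  have hfar' : 4 * (ε₁ * rbar) < dist q' cP := by rwa [← mul_assoc]
  exact (hopt q' hq').not_gt (sum_dist_lt_of_two_thirds_le_card_filter hP hfar' hheavy')

/-- Case 2(b) of Theorem 6 (weak sampling): if `c_P` is an optimal `(1,C)`-median of `P`,
`q' ∈ C` with `dist q' c_P > 4 ε₁ r̄` where `r̄` is the average distance of `P` to `c_P`,
`0 < ε₁ < 1/9`, and at least a `(1 - ε₁² - 2ε₁(1 - ε₁²))` fraction of the points of `P`
lie in the ball `B(q', ε₁ r̄)`, then switching the center from `c_P` to `q'` strictly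
decreases the cost, contradicting the optimality of `c_P`: no such configuration exists. -/
theorem no_far_heavy_center {X : Type*} [MetricSpace X] (C : Set X) (P : Finset X)
    (hP : P.Nonempty) (cP q' : X) (hcP : cP ∈ C) (hq' : q' ∈ C)
    (hopt : ∀ c ∈ C, ∑ p ∈ P, dist p cP ≤ ∑ p ∈ P, dist p c)
    (ε₁ rbar : ℝ) (hε0 : 0 < ε₁) (hε9 : ε₁ < 1 / 9)
    (hrbar : rbar = (1 / (P.card : ℝ)) * ∑ p ∈ P, dist p cP)
    (hfar : 4 * ε₁ * rbar < dist q' cP)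
    (hheavy : (1 - ε₁ ^ 2 - 2 * ε₁ * (1 - ε₁ ^ 2)) * (P.card : ℝ) ≤
      ((P.filter fun p => dist p q' ≤ ε₁ * rbar).card : ℝ)) :
    False :=
  no_far_heavy_center_general C P hP cP q' hq' hopt ε₁ rbar hε0 hε9 hfar hheavy
end

section
/- For any d ≥ 1 and any D, the metric space of finite trajectories in ℝ^d under the discrete Fréchet distance does not have doubling dimension D: there exists a trajectory τ, a radius r > 0, and a set of more than 2^D trajectories inside the ball B(τ, r) that are pairwise at distance greater than r. -/
/-- A monotone correspondence between index sets `Fin m` and `Fin n`: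
every index on both sides is matched, and the matching respects the order. -/
def IsMonotoneCorr {m n : ℕ} (C : Finset (Fin m × Fin n)) : Prop :=
  (∀ i : Fin m, ∃ j : Fin n, (i, j) ∈ C) ∧
  (∀ j : Fin n, ∃ i : Fin m, (i, j) ∈ C) ∧
  (∀ a ∈ C, ∀ b ∈ C, a.1 < b.1 → a.2 ≤ b.2) ∧
  (∀ a ∈ C, ∀ b ∈ C, a.2 < b.2 → a.1 ≤ b.1)

/-- The discrete Fréchet distance between two finite point sequences. -/
noncomputable def discFrechet {E : Type*} [MetricSpace E] {m n : ℕ}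
    (f : Fin m → E) (g : Fin n → E) : ℝ :=
  sInf {r : ℝ | ∃ C : Finset (Fin m × Fin n), IsMonotoneCorr C ∧
    ∀ q ∈ C, dist (f q.1) (g q.2) ≤ r}

/-- A (polygonal) trajectory in `ℝ^d`: a finite sequence of points. -/
def Traj (d : ℕ) := Σ m : ℕ, Fin m → EuclideanSpace ℝ (Fin d)

/-- Discrete Fréchet distance between trajectories. -/
noncomputable def dFT {d : ℕ} (τ₁ τ₂ : Traj d) : ℝ := discFrechet τ₁.2 τ₂.2

/-!
Place `m` well-separated points `pᵢ` on a line and give each of them two nearby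
alternatives. Choosing one alternative per index yields `2 ^ m` trajectories, all close to
`⟨p₁, …, pₘ⟩` via the diagonal correspondence. Two different choices differ at some
index `i`, and every correspondence has to match the `i`-th point of the first trajectory with some
point of the second, all of which are far from it; so their distance exceeds the radius.
Taking `m = D + 1` beats any doubling constant `2 ^ D`.
-/

lemma isMonotoneCorr_diag (m : ℕ) : IsMonotoneCorr (Finset.univ : Finset (Fin m)).diag := by
  refine ⟨fun i => ⟨i, by simp⟩, fun j => ⟨j, by simp⟩, ?_, ?_⟩ <;>
  · intro a ha b hb hab
    rw [Finset.mem_diag] at ha hb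
    omega

section discFrechet

variable {E : Type*} [MetricSpace E] {m n : ℕ} {r : ℝ}

lemma discFrechet_le_of_forall_dist_le {f g : Fin m → E} (hm : 0 < m)
    (h : ∀ i, dist (f i) (g i) ≤ r) : discFrechet f g ≤ r := by
  refine csInf_le ⟨0, ?_⟩ ⟨_, isMonotoneCorr_diag m, ?_⟩
  · rintro w ⟨C, hC, hw⟩
    obtain ⟨j, hj⟩ := hC.1 ⟨0, hm⟩
    exact dist_nonneg.trans (hw _ hj)
  · rintro ⟨i, j⟩ hq
    obtain ⟨-, rfl : i = j⟩ := Finset.mem_diag.1 hq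
    exact h i

lemma le_discFrechet_of_forall_le_dist {f : Fin m → E} {g : Fin n → E}
    (hC : ∃ C : Finset (Fin m × Fin n), IsMonotoneCorr C) (i : Fin m)
    (h : ∀ j, r ≤ dist (f i) (g j)) : r ≤ discFrechet f g := by
  obtain ⟨C, hC⟩ := hC
  refine le_csInf ⟨∑ q ∈ C, dist (f q.1) (g q.2), C, hC,
    fun q hq => Finset.single_le_sum (f := fun q => dist (f q.1) (g q.2))
      (fun _ _ => dist_nonneg) hq⟩ ?_
  rintro w ⟨C', hC', hw⟩
  obtain ⟨j, hj⟩ := hC'.1 i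
  exact (h j).trans (hw _ hj)

lemma le_discFrechet_of_ne {x : Fin m × Bool → E}
    (hx : Pairwise fun a b => r ≤ dist (x a) (x b)) {s t : Fin m → Bool} (hst : s ≠ t) :
    r ≤ discFrechet (fun i => x (i, s i)) (fun i => x (i, t i)) := by
  obtain ⟨i, hi⟩ := Function.ne_iff.1 hst
  refine le_discFrechet_of_forall_le_dist ⟨_, isMonotoneCorr_diag m⟩ i fun j => hx ?_
  intro h
  obtain ⟨rfl, h⟩ := Prod.mk.inj h
  exact hi h

end discFrechet

lemma injective_nat_bit : Function.Injective fun a : ℕ × Bool => Nat.bit a.2 a.1 :=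
  Equiv.boolProdNatEquivNat.injective.comp Prod.swap_injective

lemma dist_nat_bit (i : ℕ) (b : Bool) : dist (2 * i + 1 / 2 : ℝ) (Nat.bit b i) = 1 / 2 := by
  cases b <;> norm_num [Nat.bit_val, Real.dist_eq, abs_of_pos, abs_of_neg]

/-- The discrete Fréchet distance on trajectories in `ℝ^d` (`d ≥ 1`) does not have
doubling dimension `D`, for any `D`: there is a trajectory `τ`, a radius `r > 0`, and
more than `2^D` trajectories inside the ball of radius `r` around `τ` that are pairwise
at distance greater than `r`. -/
theorem frechet_not_doubling (d D : ℕ) (hd : 1 ≤ d) :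
    ∃ (τ : Traj d) (r : ℝ), 0 < r ∧
      ∃ T : Set (Traj d), T.Finite ∧ 2 ^ D < T.ncard ∧
        (∀ τ' ∈ T, dFT τ τ' ≤ r) ∧
        (∀ τ₁ ∈ T, ∀ τ₂ ∈ T, τ₁ ≠ τ₂ → r < dFT τ₁ τ₂) := by
  let e : ℝ → EuclideanSpace ℝ (Fin d) := EuclideanSpace.single ⟨0, hd⟩
  -- the alternatives for the `i`-th point are the integers `2i` and `2i + 1` on the first axis
  let x : Fin (D + 1) × Bool → EuclideanSpace ℝ (Fin d) := fun a => e (Nat.bit a.2 a.1)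
  let F : (Fin (D + 1) → Bool) → Traj d := fun s => ⟨D + 1, fun i => x (i, s i)⟩
  have hx : Pairwise fun a b => 1 ≤ dist (x a) (x b) := fun a b hab => by
    simpa [x, e, Function.onFun] using Nat.pairwise_one_le_dist.comp_of_injective
      (injective_nat_bit.comp (Fin.val_injective.prodMap Function.injective_id)) hab
  have hF : ∀ s t, s ≠ t → 1 / 2 < dFT (F s) (F t) := fun s t hst =>
    one_half_lt_one.trans_le (le_discFrechet_of_ne hx hst)
  have hF_inj : F.Injective := fun s t h => by_contra fun hst => by
    have hself : dFT (F t) (F t) ≤ 0 :=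
      discFrechet_le_of_forall_dist_le D.succ_pos fun i => (dist_self _).le
    linarith [h ▸ hF s t hst]
  refine ⟨⟨D + 1, fun i => e (2 * i + 1 / 2)⟩, 1 / 2, by norm_num,
    Set.range F, Set.finite_range F, ?_, ?_, ?_⟩
  · rw [Set.ncard_range_of_injective hF_inj]
    simpa using Nat.pow_lt_pow_right one_lt_two D.lt_succ_self
  · rintro _ ⟨s, rfl⟩
    exact discFrechet_le_of_forall_dist_le D.succ_pos fun i =>
      (PiLp.dist_single_same _ _ _ _ _).trans_le (dist_nat_bit i (s i)).le
  · rintro _ ⟨s, rfl⟩ _ ⟨t, rfl⟩ hne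
    exact hF s t (ne_of_apply_ne F hne)
end

section
/- Let (X,d) be a metric space, C ⊆ X, P ⊆ X finite with optimal (1,C)-median c_P, and let C' be an ((εa)/2)-cover of a set containing c_P, where a ≤ (1/|P|)Σ_{p∈P} d(p, c_P). Let x ∈ C' be a nearest point of C' to c_P and x' ∈ C a nearest point of C to x. Then Σ_{p∈P} d(p, x') ≤ (1+ε)·Σ_{p∈P} d(p, c_P). -/
open Finset

lemma dist_le_two_mul_of_forall_dist_le {X : Type*} [PseudoMetricSpace X] {C : Set X}
    {x x' y : X} (hy : y ∈ C) (hnear : ∀ z ∈ C, dist x x' ≤ dist x z) :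
    dist y x' ≤ 2 * dist x y :=
  calc dist y x' ≤ dist y x + dist x x' := dist_triangle _ _ _
    _ ≤ dist x y + dist x y := by rw [dist_comm]; gcongr; exact hnear y hy
    _ = 2 * dist x y := by ring

lemma sum_dist_le_sum_dist_add_card_mul {X : Type*} [PseudoMetricSpace X] (P : Finset X)
    (y z : X) : ∑ p ∈ P, dist p z ≤ ∑ p ∈ P, dist p y + #P * dist y z :=
  calc ∑ p ∈ P, dist p z ≤ ∑ p ∈ P, (dist p y + dist y z) :=
        sum_le_sum fun p _ => dist_triangle p y z
    _ = ∑ p ∈ P, dist p y + #P * dist y z := by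
        rw [sum_add_distrib, sum_const, nsmul_eq_mul]

theorem cover_point_good_center_general {X : Type*} [MetricSpace X] (C : Set X) (P : Finset X)
    (cP x x' : X) (ε a : ℝ) (hε : 0 < ε)
    (hcP : cP ∈ C)
    (ha : a * (P.card : ℝ) ≤ ∑ p ∈ P, dist p cP)
    (hx : dist x cP ≤ ε * a / 2)
    (hnear : ∀ y ∈ C, dist x x' ≤ dist x y) :
    ∑ p ∈ P, dist p x' ≤ (1 + ε) * ∑ p ∈ P, dist p cP := by
  have hcx' : dist cP x' ≤ ε * a := by
    linarith [dist_le_two_mul_of_forall_dist_le hcP hnear]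
  calc ∑ p ∈ P, dist p x' ≤ ∑ p ∈ P, dist p cP + #P * dist cP x' :=
        sum_dist_le_sum_dist_add_card_mul P cP x'
    _ ≤ ∑ p ∈ P, dist p cP + #P * (ε * a) := by gcongr
    _ = ∑ p ∈ P, dist p cP + ε * (a * #P) := by ring
    _ ≤ ∑ p ∈ P, dist p cP + ε * ∑ p ∈ P, dist p cP := by gcongr
    _ = (1 + ε) * ∑ p ∈ P, dist p cP := by ring

/-- If `c_P` is an optimal `(1,C)`-median of `P`, `x` is a point with
`dist x c_P ≤ ε a / 2` (a point of an `(εa/2)`-cover closest to `c_P`), where `a` is a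
lower bound on the average distance of `P` to `c_P`, and `x'` is a nearest point of `C`
to `x`, then `∑_{p ∈ P} dist p x' ≤ (1+ε) ∑_{p ∈ P} dist p c_P`. -/
theorem cover_point_good_center {X : Type*} [MetricSpace X] (C : Set X) (P : Finset X)
    (hP : P.Nonempty) (cP x x' : X) (ε a : ℝ) (hε : 0 < ε)
    (hcP : cP ∈ C) (hopt : ∀ c ∈ C, ∑ p ∈ P, dist p cP ≤ ∑ p ∈ P, dist p c)
    (ha : a * (P.card : ℝ) ≤ ∑ p ∈ P, dist p cP)
    (hx : dist x cP ≤ ε * a / 2)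
    (hx' : x' ∈ C) (hnear : ∀ y ∈ C, dist x x' ≤ dist x y) :
    ∑ p ∈ P, dist p x' ≤ (1 + ε) * ∑ p ∈ P, dist p cP :=
  cover_point_good_center_general C P cP x x' ε a hε hcP ha hx hnear
end
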